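/- arXiv:1810.01826 — 2 statements merged into one kernel-verified Lean document; each statement's English description precedes it below -/
import Mathlib

section
/- A subgroup of a pattern group given by a subposet is normal if and only if the proper intervals of the subposet form a co-ideal (up-closed set) of the poset of proper intervals: precisely, if O is a subposet of a finite poset R, then UT_O is normal in UT_R if and only if Int°(O) is up-closed in Int°(R), where intervals are ordered by inclusion. -/
/-- The pattern group `UT_r` as a set of invertible matrices: unipotent matrices
supported on the intervals of the relation `r`. -/
def UTset {A F : Type*} [Fintype A] [DecidableEq A] [Field F]
    (r : A → A → Prop) : Set (Matrix A A F)ˣ :=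
  {u | (∀ i, (u : Matrix A A F) i i = 1) ∧
       ∀ i j, ¬ r i j → (u : Matrix A A F) i j = 0}

/-!
Conjugating the root element `1 + E_{jk}` of `UT_O` by `1 + E_{ij} ∈ UT_R` puts a `1` at
position `(i, k)`, and conjugating it by `1 + E_{kl}` puts a `-1` at `(j, l)`; so normality lets
a proper interval `[j, k]` of `O` be widened on either side inside `O`. Conversely,
`g u g⁻¹ - 1 = g (u - 1) g⁻¹`, and a nonzero `(a, b)` entry of the right-hand side needs
`a ≤_R c <_O d ≤_R b`, because `g⁻¹` again lies in the incidence algebra of `R`: a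
subalgebra of a finite-dimensional algebra contains the inverse of each of its elements that
is a unit in the ambient algebra.
-/

theorem Subalgebra.val_inv_mem_of_finiteDimensional {K L : Type*} [Field K] [Ring L]
    [Algebra K L] [FiniteDimensional K L] (S : Subalgebra K L) {x : Lˣ} (hx : (x : L) ∈ S) :
    ((x⁻¹ : Lˣ) : L) ∈ S := by
  have hinj : Function.Injective (LinearMap.mulLeft K (⟨x, hx⟩ : S)) := fun y z hyz =>
    Subtype.ext (x.isUnit.mul_left_cancel (congrArg Subtype.val hyz))
  obtain ⟨y, hy⟩ := LinearMap.injective_iff_surjective.mp hinj 1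
  rw [x.inv_eq_of_mul_eq_one_right (congrArg Subtype.val hy)]
  exact y.2

namespace Matrix

variable {A R : Type*} [Fintype A]

theorem exists_ne_zero_of_mul_apply_ne_zero [NonUnitalNonAssocSemiring R] {M N : Matrix A A R}
    {i j : A} (h : (M * N) i j ≠ 0) : ∃ k, M i k ≠ 0 ∧ N k j ≠ 0 := by
  obtain ⟨k, -, hk⟩ := Finset.exists_ne_zero_of_sum_ne_zero h
  exact ⟨k, left_ne_zero_of_mul hk, right_ne_zero_of_mul hk⟩

variable [DecidableEq A]

def incidenceSubalgebra [CommSemiring R] (r : A → A → Prop) [IsPreorder A r] :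
    Subalgebra R (Matrix A A R) where
  carrier := {M | ∀ i j, ¬ r i j → M i j = 0}
  mul_mem' {M N} hM hN i j hij := Finset.sum_eq_zero fun k _ => by
    dsimp only
    by_cases hik : r i k
    · rw [hN k j fun hkj => hij (_root_.trans hik hkj), mul_zero]
    · rw [hM i k hik, zero_mul]
  add_mem' hM hN i j hij := by rw [add_apply, hM i j hij, hN i j hij, add_zero]
  algebraMap_mem' c i j hij := by
    rw [algebraMap_eq_diagonal, diagonal_apply_ne]
    rintro rfl
    exact hij (refl_of r i)

theorem mem_incidenceSubalgebra [CommSemiring R] {r : A → A → Prop} [IsPreorder A r]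
    {M : Matrix A A R} : M ∈ incidenceSubalgebra r ↔ ∀ i j, ¬ r i j → M i j = 0 :=
  Iff.rfl

variable [CommRing R]

def transvectionUnit {p q : A} (hpq : p ≠ q) (c : R) : (Matrix A A R)ˣ where
  val := transvection p q c
  inv := transvection p q (-c)
  val_inv := by rw [transvection_mul_transvection_same _ _ hpq, add_neg_cancel, transvection_zero]
  inv_val := by rw [transvection_mul_transvection_same _ _ hpq, neg_add_cancel, transvection_zero]

@[simp]
theorem val_transvectionUnit {p q : A} (hpq : p ≠ q) (c : R) :
    (transvectionUnit hpq c : Matrix A A R) = transvection p q c :=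
  rfl

@[simp]
theorem val_inv_transvectionUnit {p q : A} (hpq : p ≠ q) (c : R) :
    (↑(transvectionUnit hpq c)⁻¹ : Matrix A A R) = transvection p q (-c) :=
  rfl

theorem transvection_conj_transvection_apply_left {i j k : A} (hij : i ≠ j) (hjk : j ≠ k)
    (hik : i ≠ k) (c d : R) :
    (transvection i j c * transvection j k d * transvection i j (-c)) i k = c * d := by
  simp [transvection, Matrix.mul_add, Matrix.add_mul, hij, hjk, hik, hij.symm]

theorem transvection_conj_transvection_apply_right {j k l : A} (hjk : j ≠ k) (hkl : k ≠ l)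
    (hjl : j ≠ l) (c d : R) :
    (transvection k l c * transvection j k d * transvection k l (-c)) j l = -(d * c) := by
  simp [transvection, Matrix.mul_add, Matrix.add_mul, hjk, hjl, hkl, hjk.symm]

end Matrix

open Matrix

section PatternGroup

variable {A F : Type*} [Fintype A] [DecidableEq A] [Field F] {r o : A → A → Prop}

theorem val_inv_apply_eq_zero_of_mem_UTset [IsPreorder A r] {g : (Matrix A A F)ˣ}
    (hg : g ∈ UTset r) {i j : A} (hij : ¬ r i j) : (↑g⁻¹ : Matrix A A F) i j = 0 :=
  mem_incidenceSubalgebra.mp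
    ((incidenceSubalgebra (R := F) r).val_inv_mem_of_finiteDimensional (x := g)
      (mem_incidenceSubalgebra.mpr hg.2)) i j hij

theorem transvectionUnit_mem_UTset [Std.Refl r] {p q : A} (hpq : p ≠ q) (hrpq : r p q) (c : F) :
    transvectionUnit hpq c ∈ UTset r := by
  refine ⟨fun i => ?_, fun i j hij => ?_⟩
  · have hpos : ¬ (p = i ∧ q = i) := fun h => hpq (h.1.trans h.2.symm)
    simp [transvection, single_apply_of_ne _ _ _ _ _ hpos]
  · have hne : i ≠ j := by rintro rfl; exact hij (refl_of r i)
    have hpos : ¬ (p = i ∧ q = j) := by rintro ⟨rfl, rfl⟩; exact hij hrpq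
    simp [transvection, hne, single_apply_of_ne _ _ _ _ _ hpos]

theorem exists_rel_chain_of_conj_apply_ne [IsPreorder A r] {g u : (Matrix A A F)ˣ}
    (hg : g ∈ UTset r) (hu : u ∈ UTset o) {a b : A}
    (h : (↑(g * u * g⁻¹) : Matrix A A F) a b ≠ (1 : Matrix A A F) a b) :
    ∃ c d, r a c ∧ (o c d ∧ c ≠ d) ∧ r d b := by
  have hconj : (↑(g * u * g⁻¹) : Matrix A A F) - 1 =
      (g : Matrix A A F) * (u - 1) * (↑g⁻¹ : Matrix A A F) := by
    simp [mul_sub, sub_mul]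
  rw [← sub_ne_zero, ← Matrix.sub_apply, hconj] at h
  obtain ⟨d, hd, hdb⟩ := exists_ne_zero_of_mul_apply_ne_zero h
  obtain ⟨c, hac, hcd⟩ := exists_ne_zero_of_mul_apply_ne_zero hd
  have hcd' : c ≠ d := by rintro rfl; simp [hu.1 c] at hcd
  refine ⟨c, d, not_not.mp (mt (hg.2 a c) hac), ⟨not_not.mp fun ho => ?_, hcd'⟩,
    not_not.mp (mt (val_inv_apply_eq_zero_of_mem_UTset hg) hdb)⟩
  simp [hu.2 c d ho, hcd'] at hcd

theorem conj_mem_UTset_of_coideal [IsPartialOrder A r] [Std.Refl o]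
    (hsub : ∀ i j, o i j → r i j)
    (hco : ∀ i j k l, (o j k ∧ j ≠ k) → r i j → r k l → (r i l ∧ i ≠ l) →
      (o i l ∧ i ≠ l))
    {g u : (Matrix A A F)ˣ} (hg : g ∈ UTset r) (hu : u ∈ UTset o) :
    g * u * g⁻¹ ∈ UTset o := by
  refine ⟨fun a => ?_, fun a b hab => ?_⟩
  · by_contra h
    obtain ⟨c, d, hac, ⟨hcd, hcd'⟩, hda⟩ :=
      exists_rel_chain_of_conj_apply_ne hg hu (by rwa [one_apply_eq])
    exact hcd' (antisymm (hsub c d hcd) (_root_.trans hda hac))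
  · have hab' : a ≠ b := by rintro rfl; exact hab (refl_of o a)
    by_contra h
    obtain ⟨c, d, hac, hcd, hdb⟩ :=
      exists_rel_chain_of_conj_apply_ne hg hu (by rwa [one_apply_ne hab'])
    have hrab : r a b := _root_.trans hac (_root_.trans (hsub c d hcd.1) hdb)
    exact hab (hco a c d b hcd hac hdb ⟨hrab, hab'⟩).1

section Normal

variable [IsPartialOrder A r] [Std.Refl o] (hsub : ∀ i j, o i j → r i j)
  (hN : ∀ g ∈ UTset (F := F) r, ∀ u ∈ UTset (F := F) o,
    g * u * g⁻¹ ∈ UTset (F := F) o)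
include hsub hN

theorem extend_left_of_conj_mem {i j k : A} (hjk : o j k ∧ j ≠ k) (hij : r i j) :
    o i k ∧ i ≠ k := by
  have hik : i ≠ k := by rintro rfl; exact hjk.2 (antisymm (hsub _ _ hjk.1) hij)
  refine ⟨?_, hik⟩
  rcases eq_or_ne i j with rfl | hij'
  · exact hjk.1
  by_contra hik_o
  have h := (hN _ (transvectionUnit_mem_UTset hij' hij (1 : F)) _
    (transvectionUnit_mem_UTset hjk.2 hjk.1 1)).2 i k hik_o
  rw [Units.val_mul, Units.val_mul, val_transvectionUnit, val_transvectionUnit,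
    val_inv_transvectionUnit, transvection_conj_transvection_apply_left hij' hjk.2 hik] at h
  simp at h

theorem extend_right_of_conj_mem {j k l : A} (hjk : o j k ∧ j ≠ k) (hkl : r k l) :
    o j l ∧ j ≠ l := by
  have hjl : j ≠ l := by rintro rfl; exact hjk.2 (antisymm (hsub _ _ hjk.1) hkl)
  refine ⟨?_, hjl⟩
  rcases eq_or_ne k l with rfl | hkl'
  · exact hjk.1
  by_contra hjl_o
  have h := (hN _ (transvectionUnit_mem_UTset hkl' hkl (1 : F)) _
    (transvectionUnit_mem_UTset hjk.2 hjk.1 1)).2 j l hjl_o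
  rw [Units.val_mul, Units.val_mul, val_transvectionUnit, val_transvectionUnit,
    val_inv_transvectionUnit, transvection_conj_transvection_apply_right hjk.2 hkl' hjl] at h
  simp at h

end Normal

end PatternGroup

theorem pattern_subgroup_normal_iff_coideal_general
    {A F : Type*} [Fintype A] [DecidableEq A] [Field F]
    (r o : A → A → Prop) (hr : IsPartialOrder A r) (ho : IsPartialOrder A o)
    (hsub : ∀ i j, o i j → r i j) :
    (∀ g ∈ UTset (F := F) r, ∀ u ∈ UTset (F := F) o,
        g * u * g⁻¹ ∈ UTset (F := F) o) ↔
    (∀ i j k l, (o j k ∧ j ≠ k) → r i j → r k l → (r i l ∧ i ≠ l) →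
        (o i l ∧ i ≠ l)) := by
  have := hr
  have := ho
  exact ⟨fun hN _ _ _ _ hjk hij hkl _ =>
      extend_right_of_conj_mem hsub hN (extend_left_of_conj_mem hsub hN hjk hij) hkl,
    fun hco _ hg _ hu => conj_mem_UTset_of_coideal hsub hco hg hu⟩

/-- `UT_O ⊴ UT_R` iff the proper intervals of `O` form a co-ideal (up-closed set)
of the proper intervals of `R`, ordered by inclusion. -/
theorem pattern_subgroup_normal_iff_coideal
    {A F : Type*} [Fintype A] [DecidableEq A] [Field F] [Fintype F]
    (r o : A → A → Prop) (hr : IsPartialOrder A r) (ho : IsPartialOrder A o)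
    (hsub : ∀ i j, o i j → r i j) :
    (∀ g ∈ UTset (F := F) r, ∀ u ∈ UTset (F := F) o,
        g * u * g⁻¹ ∈ UTset (F := F) o) ↔
    (∀ i j k l, (o j k ∧ j ≠ k) → r i j → r k l → (r i l ∧ i ≠ l) →
        (o i l ∧ i ≠ l)) :=
  pattern_subgroup_normal_iff_coideal_general r o hr ho hsub
end

section
/- When R is a total order on an n-element set, the number of non-nesting R-partitions equals the n-th Catalan number C_n; equivalently, the number of antichains in the poset of proper intervals {[i,j] : 1 ≤ i < j ≤ n} ordered by containment ([i,j] ≤ [k,l] iff k ≤ i and j ≤ l) is C_n. -/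
/-!
A non-nesting set of intervals has no repeated left endpoint and no repeated right endpoint,
and its left endpoints come in the same order as its right endpoints. So it is determined by its
sets `I` of left and `J` of right endpoints, the `k`-th smallest element of `I` being matched
with the `k`-th smallest element of `J`; conversely every pair `I, J` of equal size arises in
this way. The intervals are proper exactly when, for every `m`, at most `#{x ∈ I | x < m}` right
endpoints are `≤ m` (a ballot condition). Writing for each position `m` the two letters
`(D if m ∈ J else U) (U if m ∈ I else D)` gives a word whose height after the first `m` blocks
is `2 (#{x ∈ I | x < m} - #{y ∈ J | y < m})`, so the ballot pairs in `{0, …, n - 1}` correspond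
to the Dyck words of semilength `n`, which are counted by `catalan n`.
-/

open Finset DyckStep

namespace NonNesting

lemma card_filter_image {α β : Type*} [DecidableEq β] {A : Finset α} {f : α → β}
    (hf : Set.InjOn f A) (P : β → Prop) [DecidablePred P] :
    #{y ∈ A.image f | P y} = #{a ∈ A | P (f a)} := by
  rw [filter_image, card_image_of_injOn (hf.mono (filter_subset _ _))]

section LinearOrder

variable {α : Type*} [LinearOrder α] {s I J : Finset α} {x y : α}

def rank (s : Finset α) (x : α) : ℕ := #{y ∈ s | y < x}

lemma rank_mono (s : Finset α) : Monotone (rank s) := fun _ _ hxy ↦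
  card_le_card (monotone_filter_right s fun _ _ hz ↦ hz.trans_le hxy)

lemma rank_lt_card_filter_le (hx : x ∈ s) : rank s x < #{y ∈ s | y ≤ x} :=
  card_lt_card (ssubset_iff_of_subset (monotone_filter_right s fun _ _ ↦ le_of_lt)
    |>.2 ⟨x, by simp [hx]⟩)

lemma rank_lt_rank (hx : x ∈ s) (hxy : x < y) : rank s x < rank s y :=
  (rank_lt_card_filter_le hx).trans_le
    (card_le_card (monotone_filter_right s fun _ _ hz ↦ hz.trans_lt hxy))

lemma rank_injOn (s : Finset α) : Set.InjOn (rank s) s := fun x hx y hy h ↦ by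
  by_contra hne
  rcases lt_or_gt_of_ne hne with hlt | hlt
  · exact (rank_lt_rank hx hlt).ne h
  · exact (rank_lt_rank hy hlt).ne' h

lemma rank_lt_card (hx : x ∈ s) : rank s x < #s :=
  (rank_lt_card_filter_le hx).trans_le (card_filter_le _ _)

lemma exists_rank_eq {r : ℕ} (hr : r < #s) : ∃ x ∈ s, rank s x = r :=
  surjOn_of_injOn_of_card_le (t := range #s) (rank s)
    (fun _ hx ↦ by simpa using rank_lt_card hx) (rank_injOn s) (by simp) (by simpa using hr)

def matching (I J : Finset α) : Finset (α × α) := {p ∈ I ×ˢ J | rank I p.1 = rank J p.2}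

lemma mem_matching {p : α × α} :
    p ∈ matching I J ↔ p.1 ∈ I ∧ p.2 ∈ J ∧ rank I p.1 = rank J p.2 := by
  simp [matching, and_assoc]

def IsNonNesting (A : Finset (α × α)) : Prop :=
  ∀ p ∈ A, ∀ q ∈ A, p ≠ q → ¬(q.1 ≤ p.1 ∧ p.2 ≤ q.2)

def IsBallot (I J : Finset α) : Prop := ∀ m, #{y ∈ J | y ≤ m} ≤ #{x ∈ I | x < m}

lemma isNonNesting_matching (I J : Finset α) : IsNonNesting (matching I J) := by
  intro p hp q hq hne ⟨h1, h2⟩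
  rw [mem_matching] at hp hq
  have hJ : rank J p.2 = rank J q.2 := by
    refine (rank_mono J h2).antisymm ?_
    rw [← hp.2.2, ← hq.2.2]
    exact rank_mono I h1
  have h2' : p.2 = q.2 := rank_injOn J hp.2.1 hq.2.1 hJ
  have h1' : p.1 = q.1 := rank_injOn I hp.1 hq.1 (by rw [hp.2.2, hq.2.2, hJ])
  exact hne (Prod.ext h1' h2')

lemma image_fst_matching (h : #I = #J) : (matching I J).image Prod.fst = I := by
  refine Subset.antisymm (fun x hx ↦ ?_) fun x hx ↦ ?_
  · obtain ⟨p, hp, rfl⟩ := mem_image.1 hx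
    exact (mem_matching.1 hp).1
  · obtain ⟨y, hy, hxy⟩ := exists_rank_eq (h ▸ rank_lt_card hx)
    exact mem_image.2 ⟨(x, y), mem_matching.2 ⟨hx, hy, hxy.symm⟩, rfl⟩

lemma image_snd_matching (h : #I = #J) : (matching I J).image Prod.snd = J := by
  refine Subset.antisymm (fun y hy ↦ ?_) fun y hy ↦ ?_
  · obtain ⟨p, hp, rfl⟩ := mem_image.1 hy
    exact (mem_matching.1 hp).2.1
  · obtain ⟨x, hx, hxy⟩ := exists_rank_eq (h ▸ rank_lt_card hy)
    exact mem_image.2 ⟨(x, y), mem_matching.2 ⟨hx, hy, hxy⟩, rfl⟩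

namespace IsNonNesting

variable {A : Finset (α × α)} (hA : IsNonNesting A)
include hA

lemma fst_lt_fst_iff_snd_lt_snd {p q : α × α} (hp : p ∈ A) (hq : q ∈ A) :
    p.1 < q.1 ↔ p.2 < q.2 := by
  constructor
  · intro h
    by_contra h'
    exact hA q hq p hp (ne_of_apply_ne Prod.fst h.ne') ⟨h.le, not_lt.1 h'⟩
  · intro h
    by_contra h'
    exact hA p hp q hq (ne_of_apply_ne Prod.snd h.ne) ⟨not_lt.1 h', h.le⟩

lemma injOn_fst : Set.InjOn Prod.fst (A : Set (α × α)) := fun _ hp _ hq h ↦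
  Prod.ext h <| le_antisymm
    (not_lt.1 fun h' ↦ ((hA.fst_lt_fst_iff_snd_lt_snd hq hp).2 h').ne h.symm)
    (not_lt.1 fun h' ↦ ((hA.fst_lt_fst_iff_snd_lt_snd hp hq).2 h').ne h)

lemma injOn_snd : Set.InjOn Prod.snd (A : Set (α × α)) := fun _ hp _ hq h ↦
  Prod.ext (le_antisymm
    (not_lt.1 fun h' ↦ ((hA.fst_lt_fst_iff_snd_lt_snd hq hp).1 h').ne h.symm)
    (not_lt.1 fun h' ↦ ((hA.fst_lt_fst_iff_snd_lt_snd hp hq).1 h').ne h)) h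

lemma card_image_fst_eq_card_image_snd : #(A.image Prod.fst) = #(A.image Prod.snd) := by
  rw [card_image_of_injOn hA.injOn_fst, card_image_of_injOn hA.injOn_snd]

lemma rank_image_fst_eq_rank_image_snd {p : α × α} (hp : p ∈ A) :
    rank (A.image Prod.fst) p.1 = rank (A.image Prod.snd) p.2 := by
  rw [rank, rank, card_filter_image hA.injOn_fst, card_filter_image hA.injOn_snd]
  exact congrArg card (filter_congr fun q hq ↦ hA.fst_lt_fst_iff_snd_lt_snd hq hp)

lemma matching_image_fst_image_snd : matching (A.image Prod.fst) (A.image Prod.snd) = A := by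
  ext p
  refine ⟨fun hp ↦ ?_, fun hp ↦ mem_matching.2
    ⟨mem_image_of_mem _ hp, mem_image_of_mem _ hp,
    hA.rank_image_fst_eq_rank_image_snd hp⟩⟩
  obtain ⟨hp1, hp2, hrank⟩ := mem_matching.1 hp
  obtain ⟨q, hq, hq1⟩ := mem_image.1 hp1
  have hq2 : q.2 = p.2 := rank_injOn _ (mem_image_of_mem _ hq) hp2
    (by rw [← hA.rank_image_fst_eq_rank_image_snd hq, hq1, hrank])
  rwa [← Prod.ext hq1 hq2]

lemma isBallot_image_iff :
    IsBallot (A.image Prod.fst) (A.image Prod.snd) ↔ ∀ p ∈ A, p.1 < p.2 := by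
  refine ⟨fun h p hp ↦ ?_, fun h m ↦ ?_⟩
  · refine (rank_mono (A.image Prod.fst)).reflect_lt ?_
    rw [hA.rank_image_fst_eq_rank_image_snd hp]
    exact (rank_lt_card_filter_le (mem_image_of_mem _ hp)).trans_le (h p.2)
  · rw [card_filter_image hA.injOn_fst, card_filter_image hA.injOn_snd]
    exact card_le_card (monotone_filter_right A fun p hp hpm ↦ (h p hp).trans_le hpm)

end IsNonNesting

def nonNestingEquivBallot :
    {A : Finset (α × α) // (∀ p ∈ A, p.1 < p.2) ∧ IsNonNesting A} ≃
    {IJ : Finset α × Finset α // #IJ.1 = #IJ.2 ∧ IsBallot IJ.1 IJ.2} where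
  toFun A := ⟨(A.1.image Prod.fst, A.1.image Prod.snd),
    A.2.2.card_image_fst_eq_card_image_snd, A.2.2.isBallot_image_iff.2 A.2.1⟩
  invFun IJ := ⟨matching IJ.1.1 IJ.1.2, (isNonNesting_matching _ _).isBallot_image_iff.1
    (by rw [image_fst_matching IJ.2.1, image_snd_matching IJ.2.1]; exact IJ.2.2),
    isNonNesting_matching _ _⟩
  left_inv A := Subtype.ext A.2.2.matching_image_fst_image_snd
  right_inv IJ := Subtype.ext (Prod.ext (image_fst_matching IJ.2.1) (image_snd_matching IJ.2.1))

end LinearOrder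

section BlockWord

variable {I J I' J' : Finset ℕ} {n : ℕ}

def blockWord (I J : Finset ℕ) : ℕ → List DyckStep
  | 0 => []
  | m + 1 => blockWord I J m ++ [if m ∈ J then D else U, if m ∈ I then U else D]

lemma length_blockWord (m : ℕ) : (blockWord I J m).length = 2 * m := by
  induction m with
  | zero => rfl
  | succ m ih => simp [blockWord, ih]; ring

lemma blockWord_prefix {m n : ℕ} (h : m ≤ n) : blockWord I J m <+: blockWord I J n := by
  induction n, h using Nat.le_induction with
  | base => exact List.prefix_refl _
  | succ n _ ih => exact ih.trans (List.prefix_append _ _)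

lemma take_blockWord_even {m n : ℕ} (h : m ≤ n) :
    (blockWord I J n).take (2 * m) = blockWord I J m := by
  rw [← length_blockWord (I := I) (J := J) m]
  exact (List.prefix_iff_eq_take.1 (blockWord_prefix h)).symm

lemma take_blockWord_odd {m n : ℕ} (h : m < n) :
    (blockWord I J n).take (2 * m + 1) = blockWord I J m ++ [if m ∈ J then D else U] := by
  calc (blockWord I J n).take (2 * m + 1)
      = ((blockWord I J n).take (2 * (m + 1))).take (2 * m + 1) := by
        rw [List.take_take]; congr 1; omega
    _ = blockWord I J m ++ [if m ∈ J then D else U] := by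
        rw [take_blockWord_even h, blockWord, List.take_append, length_blockWord,
          List.take_of_length_le (by rw [length_blockWord]; omega)]
        simp [show 2 * m + 1 - 2 * m = 1 by omega]

lemma card_filter_lt_succ (s : Finset ℕ) (m : ℕ) :
    #{x ∈ s | x < m + 1} = #{x ∈ s | x < m} + if m ∈ s then 1 else 0 := by
  simp only [Nat.lt_succ_iff_lt_or_eq, filter_or, filter_eq']
  split_ifs with h
  · rw [card_union_of_disjoint (disjoint_singleton_right.2 (by simp)), card_singleton]
  · simp

lemma count_U_blockWord (m : ℕ) :
    (blockWord I J m).count U + #{x ∈ J | x < m} = m + #{x ∈ I | x < m} := by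
  induction m with
  | zero => simp [blockWord]
  | succ m ih =>
    simp only [blockWord, List.count_append, card_filter_lt_succ]
    split_ifs <;> simp <;> omega

lemma count_D_blockWord (m : ℕ) :
    (blockWord I J m).count D + #{x ∈ I | x < m} = m + #{x ∈ J | x < m} := by
  induction m with
  | zero => simp [blockWord]
  | succ m ih =>
    simp only [blockWord, List.count_append, card_filter_lt_succ]
    split_ifs <;> simp <;> omega

lemma blockWord_eq_blockWord_iff :
    blockWord I J n = blockWord I' J' n ↔
      ∀ m < n, (m ∈ I ↔ m ∈ I') ∧ (m ∈ J ↔ m ∈ J') := by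
  induction n with
  | zero => simp [blockWord]
  | succ n ih =>
    have hlast : ([if n ∈ J then D else U, if n ∈ I then U else D] =
        [if n ∈ J' then D else U, if n ∈ I' then U else D]) ↔
        (n ∈ I ↔ n ∈ I') ∧ (n ∈ J ↔ n ∈ J') := by
      split_ifs <;> simp_all
    have happend : blockWord I J (n + 1) = blockWord I' J' (n + 1) ↔
        blockWord I J n = blockWord I' J' n ∧
          [if n ∈ J then D else U, if n ∈ I then U else D] =
            [if n ∈ J' then D else U, if n ∈ I' then U else D] :=
      ⟨fun h ↦ List.append_inj' h rfl, fun h ↦ by rw [blockWord, blockWord, h.1, h.2]⟩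
    rw [happend, ih, hlast, Nat.forall_lt_succ_right]

lemma exists_blockWord (l : List DyckStep) (hl : l.length = 2 * n) :
    ∃ I J, I ⊆ range n ∧ J ⊆ range n ∧ blockWord I J n = l := by
  induction n generalizing l with
  | zero => exact ⟨∅, ∅, by simp, by simp, (List.length_eq_zero_iff.1 hl).symm⟩
  | succ n ih =>
    obtain ⟨I, J, hI, hJ, hIJ⟩ := ih (l.take (2 * n)) (by simp [hl])
    obtain ⟨a, b, hab⟩ :=
      List.length_eq_two.1 (show (l.drop (2 * n)).length = 2 by simp [hl]; omega)
    refine ⟨if b = U then insert n I else I, if a = D then insert n J else J, ?_, ?_, ?_⟩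
    · split_ifs <;> simp [insert_subset_iff, hI.trans (range_mono n.le_succ)]
    · split_ifs <;> simp [insert_subset_iff, hJ.trans (range_mono n.le_succ)]
    have hbelow : blockWord (if b = U then insert n I else I) (if a = D then insert n J else J) n =
        blockWord I J n :=
      blockWord_eq_blockWord_iff.2 fun m hm ↦ by split_ifs <;> simp [hm.ne]
    conv_rhs => rw [← List.take_append_drop (2 * n) l, hab]
    rw [blockWord, hbelow, hIJ]
    have hnI : n ∉ I := fun h ↦ by simpa using hI h
    have hnJ : n ∉ J := fun h ↦ by simpa using hJ h
    cases a <;> cases b <;> simp [hnI, hnJ]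

lemma isDyck_blockWord_iff (hI : I ⊆ range n) (hJ : J ⊆ range n) :
    ((blockWord I J n).count U = (blockWord I J n).count D ∧
      ∀ i, ((blockWord I J n).take i).count D ≤ ((blockWord I J n).take i).count U) ↔
    #I = #J ∧ ∀ m < n, #{y ∈ J | y ≤ m} ≤ #{x ∈ I | x < m} := by
  have hIn : #{x ∈ I | x < n} = #I := by
    rw [filter_true_of_mem fun x hx ↦ mem_range.1 (hI hx)]
  have hJn : #{x ∈ J | x < n} = #J := by
    rw [filter_true_of_mem fun x hx ↦ mem_range.1 (hJ hx)]
  have hUn := count_U_blockWord (I := I) (J := J) n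
  have hDn := count_D_blockWord (I := I) (J := J) n
  have hodd : ∀ m < n, (((blockWord I J n).take (2 * m + 1)).count D ≤
      ((blockWord I J n).take (2 * m + 1)).count U ↔
        #{y ∈ J | y ≤ m} ≤ #{x ∈ I | x < m}) := by
    intro m hm
    have hUm := count_U_blockWord (I := I) (J := J) m
    have hDm := count_D_blockWord (I := I) (J := J) m
    have hJm := card_filter_lt_succ J m
    simp only [Nat.lt_succ_iff] at hJm
    rw [take_blockWord_odd hm, List.count_append, List.count_append]
    split_ifs at hJm ⊢ <;> simp <;> omega
  constructor
  · rintro ⟨hUD, hpre⟩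
    exact ⟨by omega, fun m hm ↦ (hodd m hm).1 (hpre _)⟩
  · rintro ⟨hcard, hballot⟩
    refine ⟨by omega, fun i ↦ ?_⟩
    rcases le_or_gt (2 * n) i with hi | hi
    · rw [List.take_of_length_le (by rw [length_blockWord]; omega)]
      omega
    obtain ⟨m, hm, rfl | rfl⟩ : ∃ m < n, i = 2 * m ∨ i = 2 * m + 1 :=
      ⟨i / 2, by omega, by omega⟩
    · have hUm := count_U_blockWord (I := I) (J := J) m
      have hDm := count_D_blockWord (I := I) (J := J) m
      have hJm : #{y ∈ J | y < m} ≤ #{y ∈ J | y ≤ m} :=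
        card_le_card (monotone_filter_right J fun _ _ ↦ le_of_lt)
      have := hballot m hm
      rw [take_blockWord_even hm.le]
      omega
    · exact (hodd m hm).2 (hballot m hm)

lemma blockWord_injOn (hI : I ⊆ range n) (hJ : J ⊆ range n) (hI' : I' ⊆ range n)
    (hJ' : J' ⊆ range n) (h : blockWord I J n = blockWord I' J' n) : I = I' ∧ J = J' := by
  have hagree := blockWord_eq_blockWord_iff.1 h
  constructor <;> ext m <;> by_cases hm : m < n
  · exact (hagree m hm).1
  · exact iff_of_false (fun h ↦ hm (mem_range.1 (hI h))) fun h ↦ hm (mem_range.1 (hI' h))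
  · exact (hagree m hm).2
  · exact iff_of_false (fun h ↦ hm (mem_range.1 (hJ h))) fun h ↦ hm (mem_range.1 (hJ' h))

end BlockWord

section Fin

variable {n : ℕ}

lemma isBallot_iff_map_val {I J : Finset (Fin n)} :
    IsBallot I J ↔ ∀ m < n,
      #{y ∈ J.map Fin.valEmbedding | y ≤ m} ≤ #{x ∈ I.map Fin.valEmbedding | x < m} := by
  simp only [IsBallot, Fin.forall_iff, filter_map, card_map]
  rfl

lemma map_valEmbedding_subset_range (s : Finset (Fin n)) : s.map Fin.valEmbedding ⊆ range n := by
  simp [subset_iff]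

def dyckWordOfBallot (n : ℕ)
    (IJ : {IJ : Finset (Fin n) × Finset (Fin n) // #IJ.1 = #IJ.2 ∧ IsBallot IJ.1 IJ.2}) :
    {p : DyckWord // p.semilength = n} :=
  have hDyck := (isDyck_blockWord_iff (map_valEmbedding_subset_range IJ.1.1)
    (map_valEmbedding_subset_range IJ.1.2)).2 ⟨by simp [IJ.2.1], isBallot_iff_map_val.1 IJ.2.2⟩
  ⟨⟨blockWord (IJ.1.1.map Fin.valEmbedding) (IJ.1.2.map Fin.valEmbedding) n,
      hDyck.1, hDyck.2⟩,
    by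
      have h := DyckWord.two_mul_semilength_eq_length (p := ⟨_, hDyck.1, hDyck.2⟩)
      rw [length_blockWord] at h
      omega⟩

lemma bijective_dyckWordOfBallot (n : ℕ) : Function.Bijective (dyckWordOfBallot n) := by
  constructor
  · rintro ⟨⟨I, J⟩, hIJ⟩ ⟨⟨I', J'⟩, hIJ'⟩ h
    have hword := congrArg (fun p ↦ p.1.toList) h
    obtain ⟨hI, hJ⟩ := blockWord_injOn (map_valEmbedding_subset_range I)
      (map_valEmbedding_subset_range J) (map_valEmbedding_subset_range I')
      (map_valEmbedding_subset_range J') hword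
    simp only [map_inj] at hI hJ
    subst hI hJ
    rfl
  · rintro ⟨p, hp⟩
    have hlen : p.toList.length = 2 * n := by rw [← p.two_mul_semilength_eq_length, hp]
    obtain ⟨S, T, hS, hT, hST⟩ := exists_blockWord p.toList hlen
    obtain ⟨hcard, hballot⟩ := (isDyck_blockWord_iff hS hT).1
      (hST ▸ ⟨p.count_U_eq_count_D, p.count_D_le_count_U⟩)
    have hS' : ∀ m ∈ S, m < n := fun m hm ↦ mem_range.1 (hS hm)
    have hT' : ∀ m ∈ T, m < n := fun m hm ↦ mem_range.1 (hT hm)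
    refine ⟨⟨(S.attachFin hS', T.attachFin hT'), by simpa using hcard,
      isBallot_iff_map_val.2 (by simpa using hballot)⟩, ?_⟩
    apply Subtype.ext
    apply DyckWord.ext
    simp [dyckWordOfBallot, hST]

end Fin

end NonNesting

open NonNesting in
/-- The number of antichains in the poset of proper intervals
`{[i,j] : i < j}` of a linear order on `n` elements, ordered by containment
(`[i,j] ≤ [k,l]` iff `k ≤ i` and `j ≤ l`), is the `n`-th Catalan number. -/
theorem card_nonnesting_partitions_eq_catalan (n : ℕ) :
    Nat.card {A : Set (Fin n × Fin n) //
      (∀ p ∈ A, p.1 < p.2) ∧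
      ∀ p ∈ A, ∀ q ∈ A, p ≠ q → ¬ (q.1 ≤ p.1 ∧ p.2 ≤ q.2)} = catalan n := by
  rw [← DyckWord.card_dyckWord_semilength_eq_catalan, ← Nat.card_eq_fintype_card]
  calc _ = Nat.card {A : Finset (Fin n × Fin n) // (∀ p ∈ A, p.1 < p.2) ∧ IsNonNesting A} :=
        Nat.card_congr (Fintype.finsetEquivSet.subtypeEquiv fun _ ↦ Iff.rfl).symm
    _ = Nat.card {IJ : Finset (Fin n) × Finset (Fin n) // #IJ.1 = #IJ.2 ∧ IsBallot IJ.1 IJ.2} :=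
        Nat.card_congr nonNestingEquivBallot
    _ = _ := Nat.card_eq_of_bijective _ (bijective_dyckWordOfBallot n)
end
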